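/- arXiv:1308.5323 — 4 statements merged into one kernel-verified Lean document; each statement's English description precedes it below -/
import Mathlib

section
/- Let H be a Hilbert space and t₀, t₁ two bounded Hermitian sesquilinear forms on H with ker t₁ = {0}, where ker t denotes {φ : t[φ,ψ]=0 for all ψ}. Suppose every linear subspace L on which t₀ is nonpositive (t₀[φ,φ] ≤ 0 for all φ ∈ L) has dimension at most m < ∞. Then the number of non-real complex numbers z for which ker(t₀ + z t₁) ≠ {0} is at most 2m. -/
/-!
If `t₁` is nondegenerate, the pencil `t₀ + z t₁` is an ordinary eigenvalue problem for `t₁⁻¹ t₀` on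
the span of its kernel vectors, so kernel vectors `φ_z` for distinct `z` are linearly independent.
For a set `A` of such `z` containing no pair `z = w̄`, Hermitian symmetry gives
`(w̄ - z) t₁[φ_z, φ_w] = 0`, hence `t₁[φ_z, φ_w] = t₀[φ_z, φ_w] = 0`: `t₀` vanishes on the span of the
`φ_z`, so `#A ≤ m`. The non-real `z` in either open half-plane form such a set.
-/

open Submodule ComplexConjugate

theorem LinearIndependent.of_apply_eq_smul_apply {R M N ι : Type*} [CommRing R] [IsDomain R]
    [AddCommGroup M] [Module R M] [Module.IsTorsionFree R M] [AddCommGroup N] [Module R N]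
    {f g : M →ₗ[R] N} (hg : Function.Injective g) {μ : ι → R} (hμ : Function.Injective μ)
    {v : ι → M} (hv : ∀ i, v i ≠ 0) (hfg : ∀ i, f (v i) = μ i • g (v i)) :
    LinearIndependent R v := by
  set W := span R (Set.range v)
  have hgW : Function.Injective (g.domRestrict W) := hg.comp Subtype.val_injective
  have hfW : ∀ w : W, f w ∈ LinearMap.range (g.domRestrict W) := by
    suffices W ≤ (LinearMap.range (g.domRestrict W)).comap f from fun w => this w.2
    refine span_le.2 ?_
    rintro _ ⟨i, rfl⟩
    exact ⟨μ i • ⟨v i, subset_span ⟨i, rfl⟩⟩, by simp [hfg]⟩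
  obtain ⟨T, hT⟩ : ∃ T : Module.End R W, ∀ w, g (T w) = f w := by
    let e := LinearEquiv.ofInjective _ hgW
    refine ⟨e.symm.toLinearMap ∘ₗ (f.domRestrict W).codRestrict _ hfW, fun w => ?_⟩
    exact congrArg Subtype.val (e.apply_symm_apply ⟨f w, hfW w⟩)
  let v' : ι → W := fun i => ⟨v i, subset_span ⟨i, rfl⟩⟩
  have hTv : ∀ i, T.HasEigenvector (μ i) (v' i) := by
    refine fun i => Module.End.hasEigenvector_iff.2 ⟨Module.End.mem_eigenspace_iff.2 ?_, ?_⟩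
    · exact hgW (by simp [v', hT, hfg])
    · simpa [v'] using hv i
  exact (T.eigenvectors_linearIndependent' μ hμ v' hTv).map' W.subtype W.ker_subtype

theorem LinearMap.apply_eq_zero_of_mem_span {R M ι : Type*} [CommSemiring R]
    {σ : R →+* R} [AddCommMonoid M] [Module R M]
    (B : M →ₗ[R] M →ₛₗ[σ] R) {v : ι → M} (h : ∀ i j, B (v i) (v j) = 0) {x y : M}
    (hx : x ∈ span R (Set.range v)) (hy : y ∈ span R (Set.range v)) : B x y = 0 := by
  have hv : ∀ i, span R (Set.range v) ≤ LinearMap.ker (B (v i)) := fun i =>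
    span_le.2 (by rintro _ ⟨j, rfl⟩; exact h i j)
  have : span R (Set.range v) ≤ LinearMap.ker (B.flip y) :=
    span_le.2 (by rintro _ ⟨i, rfl⟩; exact hv i hy)
  exact this hx

theorem ne_conj_of_im_mul_im_pos {z w : ℂ} (h : 0 < z.im * w.im) : z ≠ conj w := by
  rintro rfl
  rw [Complex.conj_im, neg_mul] at h
  linarith [mul_self_nonneg w.im]

section HermitianPencil

variable {M : Type*} [AddCommGroup M] [Module ℂ M] {t₀ t₁ : M →ₗ[ℂ] M →ₗ⋆[ℂ] ℂ}

theorem mem_ker_add_smul_iff {z : ℂ} {φ : M} :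
    φ ∈ LinearMap.ker (t₀ + z • t₁) ↔ ∀ ψ, t₀ φ ψ + z * t₁ φ ψ = 0 := by
  simp [LinearMap.ext_iff]

theorem apply_eq_zero_of_mem_ker_of_ne_conj
    (hherm₀ : ∀ u v, t₀ u v = conj (t₀ v u)) (hherm₁ : ∀ u v, t₁ u v = conj (t₁ v u))
    {z w : ℂ} {φ ψ : M} (hφ : φ ∈ LinearMap.ker (t₀ + z • t₁))
    (hψ : ψ ∈ LinearMap.ker (t₀ + w • t₁)) (hzw : z ≠ conj w) : t₀ φ ψ = 0 := by
  rw [mem_ker_add_smul_iff] at hφ hψ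
  have hψφ := congrArg conj (hψ φ)
  rw [map_add, map_mul, ← hherm₀, ← hherm₁, map_zero] at hψφ
  have h₁ : t₁ φ ψ = 0 := by
    refine (mul_eq_zero.1 (?_ : (conj w - z) * t₁ φ ψ = 0)).resolve_left (sub_ne_zero.2 hzw.symm)
    linear_combination hψφ - hφ ψ
  linear_combination hφ ψ - z * h₁

theorem encard_le_of_forall_ne_conj
    (hherm₀ : ∀ u v, t₀ u v = conj (t₀ v u)) (hherm₁ : ∀ u v, t₁ u v = conj (t₁ v u))
    (hker : LinearMap.ker t₁ = ⊥) {m : ℕ}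
    (hm : ∀ L : Submodule ℂ M, (∀ φ ∈ L, (t₀ φ φ).re ≤ 0) → Module.rank ℂ L ≤ m)
    {A : Set ℂ} (hA : ∀ z ∈ A, LinearMap.ker (t₀ + z • t₁) ≠ ⊥)
    (hconj : ∀ z ∈ A, ∀ w ∈ A, z ≠ conj w) : A.encard ≤ m := by
  have hφ : ∀ z : A, ∃ φ ∈ LinearMap.ker (t₀ + (z : ℂ) • t₁), φ ≠ 0 := fun z =>
    (Submodule.ne_bot_iff _).1 (hA z z.2)
  choose φ hφker hφ0 using hφ
  have hli : LinearIndependent ℂ φ := by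
    refine .of_apply_eq_smul_apply (f := t₀) (LinearMap.ker_eq_bot.1 hker)
      (neg_injective.comp Subtype.val_injective) hφ0 fun z => ?_
    rw [Function.comp_apply, neg_smul, eq_neg_iff_add_eq_zero]
    exact hφker z
  have hiso : ∀ u ∈ span ℂ (Set.range φ), t₀ u u = 0 := fun u hu =>
    t₀.apply_eq_zero_of_mem_span (fun z w => apply_eq_zero_of_mem_ker_of_ne_conj hherm₀ hherm₁
      (hφker z) (hφker w) (hconj z z.2 w w.2)) hu hu
  have hrank := hm (span ℂ (Set.range φ)) fun u hu => by simp [hiso u hu]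
  rw [rank_span hli] at hrank
  calc A.encard ≤ (Set.range φ).encard := hli.injective.encard_range
    _ ≤ m := Cardinal.toENat_le_natCast.2 hrank

end HermitianPencil

theorem card_nonreal_degenerate_le_general
    {H : Type*} [NormedAddCommGroup H] [InnerProductSpace ℂ H]
    (t₀ t₁ : H →ₗ[ℂ] H →ₗ⋆[ℂ] ℂ)
    (hherm₀ : ∀ u v : H, t₀ u v = starRingEnd ℂ (t₀ v u))
    (hherm₁ : ∀ u v : H, t₁ u v = starRingEnd ℂ (t₁ v u))
    (hker : ∀ φ : H, (∀ ψ : H, t₁ φ ψ = 0) → φ = 0)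
    (m : ℕ)
    (hm : ∀ L : Submodule ℂ H, (∀ φ ∈ L, (t₀ φ φ).re ≤ 0) → Module.rank ℂ L ≤ m) :
    {z : ℂ | z.im ≠ 0 ∧ ∃ φ : H, φ ≠ 0 ∧ ∀ ψ : H, t₀ φ ψ + z * t₁ φ ψ = 0}.Finite ∧
    {z : ℂ | z.im ≠ 0 ∧ ∃ φ : H, φ ≠ 0 ∧ ∀ ψ : H, t₀ φ ψ + z * t₁ φ ψ = 0}.ncard ≤ 2 * m := by
  have hker' : LinearMap.ker t₁ = ⊥ :=
    LinearMap.ker_eq_bot'.2 fun φ hφ => hker φ fun ψ => by simp [hφ]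
  have hsplit : {z : ℂ | z.im ≠ 0 ∧ ∃ φ : H, φ ≠ 0 ∧ ∀ ψ : H, t₀ φ ψ + z * t₁ φ ψ = 0} =
      {z | 0 < z.im ∧ LinearMap.ker (t₀ + z • t₁) ≠ ⊥} ∪
        {z | z.im < 0 ∧ LinearMap.ker (t₀ + z • t₁) ≠ ⊥} := by
    ext z
    simp only [Set.mem_ofPred_eq, Set.mem_union, Submodule.ne_bot_iff, mem_ker_add_smul_iff,
      ne_iff_lt_or_gt, or_and_right, and_comm (b := ¬_ = (0 : H))]
    exact or_comm
  have hupper := encard_le_of_forall_ne_conj hherm₀ hherm₁ hker' hm (A := {z | 0 < z.im ∧ _})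
    (fun z hz => hz.2) fun z hz w hw => ne_conj_of_im_mul_im_pos (mul_pos hz.1 hw.1)
  have hlower := encard_le_of_forall_ne_conj hherm₀ hherm₁ hker' hm (A := {z | z.im < 0 ∧ _})
    (fun z hz => hz.2) fun z hz w hw => ne_conj_of_im_mul_im_pos (mul_pos_of_neg_of_neg hz.1 hw.1)
  rw [← Set.encard_le_coe_iff_finite_ncard_le, hsplit]
  calc _ ≤ _ := Set.encard_union_le _ _
    _ ≤ m + m := add_le_add hupper hlower
    _ = (2 * m : ℕ) := by push_cast; ring

/-- Abstract lemma: if `t₀, t₁` are bounded Hermitian sesquilinear forms on a Hilbert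
space with `ker t₁ = {0}`, and every subspace on which `t₀` is nonpositive has dimension
at most `m < ∞`, then the set of non-real `z` with `ker (t₀ + z t₁) ≠ {0}` has at most
`2m` elements. -/
theorem card_nonreal_degenerate_le
    {H : Type*} [NormedAddCommGroup H] [InnerProductSpace ℂ H] [CompleteSpace H]
    (t₀ t₁ : H →ₗ[ℂ] H →ₗ⋆[ℂ] ℂ)
    (hb₀ : ∃ C : ℝ, ∀ u v : H, ‖t₀ u v‖ ≤ C * ‖u‖ * ‖v‖)
    (hb₁ : ∃ C : ℝ, ∀ u v : H, ‖t₁ u v‖ ≤ C * ‖u‖ * ‖v‖)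
    (hherm₀ : ∀ u v : H, t₀ u v = starRingEnd ℂ (t₀ v u))
    (hherm₁ : ∀ u v : H, t₁ u v = starRingEnd ℂ (t₁ v u))
    (hker : ∀ φ : H, (∀ ψ : H, t₁ φ ψ = 0) → φ = 0)
    (m : ℕ)
    (hm : ∀ L : Submodule ℂ H, (∀ φ ∈ L, (t₀ φ φ).re ≤ 0) → Module.rank ℂ L ≤ m) :
    {z : ℂ | z.im ≠ 0 ∧ ∃ φ : H, φ ≠ 0 ∧ ∀ ψ : H, t₀ φ ψ + z * t₁ φ ψ = 0}.Finite ∧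
    {z : ℂ | z.im ≠ 0 ∧ ∃ φ : H, φ ≠ 0 ∧ ∀ ψ : H, t₀ φ ψ + z * t₁ φ ψ = 0}.ncard ≤ 2 * m :=
  card_nonreal_degenerate_le_general t₀ t₁ hherm₀ hherm₁ hker m hm
end

section
/- Let H be a Hilbert space, t₀ and t₁ bounded Hermitian sesquilinear forms on H with ker t₁ = {0}. Let z₁, …, zₙ be distinct complex numbers with positive imaginary parts, and for each j let φⱼ be a nonzero element of ker(t₀ + zⱼ t₁). Then the vectors φ₁, …, φₙ are linearly independent. -/
/-- Let `t₀, t₁` be bounded Hermitian sesquilinear forms on a Hilbert space with trivial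
`ker t₁`. If `z 1, …, z n` are distinct complex numbers with positive imaginary part and
`φ j` is a nonzero element of `ker (t₀ + z j • t₁)` for each `j`, then the `φ j` are
linearly independent. -/
theorem linearIndependent_of_distinct_kernel_vectors
    {H : Type*} [NormedAddCommGroup H] [InnerProductSpace ℂ H] [CompleteSpace H]
    (t₀ t₁ : H →ₗ[ℂ] H →ₗ⋆[ℂ] ℂ)
    (hb₀ : ∃ C : ℝ, ∀ u v : H, ‖t₀ u v‖ ≤ C * ‖u‖ * ‖v‖)
    (hb₁ : ∃ C : ℝ, ∀ u v : H, ‖t₁ u v‖ ≤ C * ‖u‖ * ‖v‖)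
    (hherm₀ : ∀ u v : H, t₀ u v = starRingEnd ℂ (t₀ v u))
    (hherm₁ : ∀ u v : H, t₁ u v = starRingEnd ℂ (t₁ v u))
    (hker : ∀ φ : H, (∀ ψ : H, t₁ φ ψ = 0) → φ = 0)
    (n : ℕ) (z : Fin n → ℂ) (hzdist : Function.Injective z)
    (hzim : ∀ j, 0 < (z j).im)
    (φ : Fin n → H) (hφ0 : ∀ j, φ j ≠ 0)
    (hφ : ∀ j, ∀ ψ : H, t₀ (φ j) ψ + z j * t₁ (φ j) ψ = 0) :
    LinearIndependent ℂ φ := by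
  -- Key step: a linear relation can be multiplied by `z j` coefficientwise.
  have key : ∀ c : Fin n → ℂ, (∑ j, c j • φ j) = 0 → (∑ j, (c j * z j) • φ j) = 0 := by
    intro c hc
    apply hker
    intro ψ
    have h1 : t₁ (∑ j, (c j * z j) • φ j) ψ = ∑ j, c j * (z j * t₁ (φ j) ψ) := by
      simp [mul_assoc]
    have h2 : t₀ (∑ j, c j • φ j) ψ = ∑ j, c j * t₀ (φ j) ψ := by simp
    have h3 : ∀ j, z j * t₁ (φ j) ψ = -(t₀ (φ j) ψ) := by
      intro j
      have h := hφ j ψ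
      linear_combination h
    rw [h1]
    have h4 : ∑ j, c j * (z j * t₁ (φ j) ψ) = -∑ j, c j * t₀ (φ j) ψ := by
      rw [← Finset.sum_neg_distrib]
      exact Finset.sum_congr rfl fun j _ => by rw [h3 j]; ring
    rw [h4, ← h2, hc]
    simp
  -- Hence a relation can be multiplied by any polynomial evaluated at `z j`.
  have poly : ∀ c : Fin n → ℂ, (∑ j, c j • φ j) = 0 →
      ∀ p : Polynomial ℂ, (∑ j, (c j * p.eval (z j)) • φ j) = 0 := by
    intro c hc p
    induction p using Polynomial.induction_on' with
    | add p q hp hq =>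
      have : (∑ j, (c j * (p + q).eval (z j)) • φ j)
          = (∑ j, (c j * p.eval (z j)) • φ j) + (∑ j, (c j * q.eval (z j)) • φ j) := by
        rw [← Finset.sum_add_distrib]
        exact Finset.sum_congr rfl fun j _ => by
          simp [mul_add, add_smul]
      rw [this, hp, hq, add_zero]
    | monomial m a =>
      have base : ∀ m : ℕ, (∑ j, (c j * z j ^ m) • φ j) = 0 := by
        intro m
        induction m with
        | zero => simpa using hc
        | succ k ih =>
          have := key (fun j => c j * z j ^ k) ih
          simpa [mul_assoc, pow_succ] using this
      have := base m
      have h5 : (∑ j, (c j * (Polynomial.monomial m a).eval (z j)) • φ j)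
          = a • ∑ j, (c j * z j ^ m) • φ j := by
        rw [Finset.smul_sum]
        exact Finset.sum_congr rfl fun j _ => by
          simp [Polynomial.eval_monomial, smul_smul]; ring_nf
      rw [h5, this, smul_zero]
  rw [Fintype.linearIndependent_iff]
  intro c hc k
  -- use the Lagrange basis polynomial at node `k`
  have hinj : Set.InjOn z (Finset.univ : Finset (Fin n)) := Set.injOn_of_injective hzdist
  have hp := poly c hc (Lagrange.basis Finset.univ z k)
  have heval : ∀ j : Fin n, (Lagrange.basis Finset.univ z k).eval (z j)
      = if j = k then 1 else 0 := by
    intro j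
    by_cases h : j = k
    · subst h; simp [Lagrange.eval_basis_self hinj (Finset.mem_univ j)]
    · simp [h, Lagrange.eval_basis_of_ne (Ne.symm h) (Finset.mem_univ j)]
  have : (∑ j, (c j * (Lagrange.basis Finset.univ z k).eval (z j)) • φ j) = c k • φ k := by
    rw [Finset.sum_eq_single k]
    · simp [heval k]
    · intro j _ hj; simp [heval j, hj]
    · intro h; exact absurd (Finset.mem_univ k) h
  rw [this] at hp
  by_contra hck
  exact hφ0 k (by simpa [hck] using smul_eq_zero.mp hp |>.resolve_left hck)
end

section
/- Let H be a Hilbert space, t₀ and t₁ bounded Hermitian sesquilinear forms on H. Let z and w be complex numbers with Im z > 0 and Im w > 0 (possibly equal or distinct), and let φ ∈ ker(t₀ + z t₁), ψ ∈ ker(t₀ + w t₁). Then t₀[φ,ψ] = 0 and t₁[φ,ψ] = 0. -/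
/-!
Hermitian symmetry turns the kernel equation of `ψ`, tested against `φ` and conjugated, into
`t₀[φ,ψ] + w̄ t₁[φ,ψ] = 0`, while that of `φ`, tested against `ψ`, reads `t₀[φ,ψ] + z t₁[φ,ψ] = 0`.
Since `Im z > 0 > Im w̄`, the coefficients `z ≠ w̄` make this linear system in
`(t₀[φ,ψ], t₁[φ,ψ])` nondegenerate.
-/

open ComplexConjugate

theorem eq_zero_of_add_mul_eq_zero_of_ne {K : Type*} [Field K] {a b z w : K}
    (hz : a + z * b = 0) (hw : a + w * b = 0) (hne : z ≠ w) : a = 0 ∧ b = 0 := by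
  have hb : b = 0 := by
    have hprod : (z - w) * b = 0 := by linear_combination hz - hw
    exact (mul_eq_zero.mp hprod).resolve_left (sub_ne_zero.mpr hne)
  exact ⟨by simpa [hb] using hz, hb⟩

theorem Complex.ne_conj_of_im_pos {z w : ℂ} (hz : 0 < z.im) (hw : 0 < w.im) : z ≠ conj w := by
  intro h
  have him := congrArg Complex.im h
  rw [Complex.conj_im] at him
  linarith

theorem LinearMap.apply_add_conj_mul_apply_eq_zero {M : Type*} [AddCommMonoid M] [Module ℂ M]
    {t₀ t₁ : M →ₗ[ℂ] M →ₗ⋆[ℂ] ℂ}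
    (hherm₀ : ∀ u v : M, t₀ u v = conj (t₀ v u)) (hherm₁ : ∀ u v : M, t₁ u v = conj (t₁ v u))
    {w : ℂ} {ψ : M} (hψ : ∀ η : M, t₀ ψ η + w * t₁ ψ η = 0) (φ : M) :
    t₀ φ ψ + conj w * t₁ φ ψ = 0 := by
  simpa only [map_add, map_mul, map_zero, ← hherm₀, ← hherm₁] using congrArg conj (hψ φ)

theorem kernels_mutually_orthogonal_general
    {H : Type*} [NormedAddCommGroup H] [InnerProductSpace ℂ H]
    (t₀ t₁ : H →ₗ[ℂ] H →ₗ⋆[ℂ] ℂ)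
    (hherm₀ : ∀ u v : H, t₀ u v = starRingEnd ℂ (t₀ v u))
    (hherm₁ : ∀ u v : H, t₁ u v = starRingEnd ℂ (t₁ v u))
    (z w : ℂ) (hz : 0 < z.im) (hw : 0 < w.im)
    (φ ψ : H)
    (hφ : ∀ η : H, t₀ φ η + z * t₁ φ η = 0)
    (hψ : ∀ η : H, t₀ ψ η + w * t₁ ψ η = 0) :
    t₀ φ ψ = 0 ∧ t₁ φ ψ = 0 :=
  eq_zero_of_add_mul_eq_zero_of_ne (hφ ψ)
    (LinearMap.apply_add_conj_mul_apply_eq_zero hherm₀ hherm₁ hψ φ)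
    (Complex.ne_conj_of_im_pos hz hw)

/-- If `t₀, t₁` are bounded Hermitian sesquilinear forms (linear in the first argument,
conjugate-linear in the second), `z, w` have positive imaginary part,
`φ ∈ ker (t₀ + z t₁)` and `ψ ∈ ker (t₀ + w t₁)`, then `t₀[φ,ψ] = 0` and `t₁[φ,ψ] = 0`. -/
theorem kernels_mutually_orthogonal
    {H : Type*} [NormedAddCommGroup H] [InnerProductSpace ℂ H] [CompleteSpace H]
    (t₀ t₁ : H →ₗ[ℂ] H →ₗ⋆[ℂ] ℂ)
    (hb₀ : ∃ C : ℝ, ∀ u v : H, ‖t₀ u v‖ ≤ C * ‖u‖ * ‖v‖)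
    (hb₁ : ∃ C : ℝ, ∀ u v : H, ‖t₁ u v‖ ≤ C * ‖u‖ * ‖v‖)
    (hherm₀ : ∀ u v : H, t₀ u v = starRingEnd ℂ (t₀ v u))
    (hherm₁ : ∀ u v : H, t₁ u v = starRingEnd ℂ (t₁ v u))
    (z w : ℂ) (hz : 0 < z.im) (hw : 0 < w.im)
    (φ ψ : H)
    (hφ : ∀ η : H, t₀ φ η + z * t₁ φ η = 0)
    (hψ : ∀ η : H, t₀ ψ η + w * t₁ ψ η = 0) :
    t₀ φ ψ = 0 ∧ t₁ φ ψ = 0 :=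
  kernels_mutually_orthogonal_general t₀ t₁ hherm₀ hherm₁ z w hz hw φ ψ hφ hψ
end

section
/- Let 2πb ∈ ℤ and f ∈ C₀^∞(ℝ³). Then the function v(x) = (Uf)(x,k) = Σ_{n∈ℤ³} e^{−i k·(x+2πn)} e^{i 2π b n₂ x₁} f(x+2πn) satisfies the quasiperiodicity condition v(x₁, π, x₃) = e^{−i 2π b x₁} v(x₁, −π, x₃), and is periodic in x₁ and x₃: v(−π,x₂,x₃) = v(π,x₂,x₃) and v(x₁,x₂,−π) = v(x₁,x₂,π). -/
private lemma tsum_shift_aux (T S : (Fin 3 → ℤ) → ℂ) (c : ℂ) (g : Fin 3 → ℤ)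
    (h : ∀ n, T n = c * S (n + g)) : ∑' n, T n = c * ∑' n, S n := by
  calc ∑' n, T n = ∑' n, c * S (n + g) := tsum_congr h
    _ = c * ∑' n, S n := by
        rw [← tsum_mul_left]
        exact Equiv.tsum_eq (Equiv.addRight g) (fun n => c * S n)

/-- Boundary behaviour of the Floquet–Bloch–Gelfand transform: for `2πb ∈ ℤ`, `k ∈ ℝ³`
and `f ∈ C₀^∞(ℝ³)`, the function
`v(x) = Σ_{n ∈ ℤ³} e^{-i k·(x+2πn)} e^{i 2π b n₂ x₁} f(x+2πn)`
is quasiperiodic in `x₂` and periodic in `x₁` and `x₃`. -/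
theorem gelfand_transform_boundary_conditions
    (b : ℝ) (hb : 0 ≤ b) (hbint : ∃ m : ℤ, 2 * Real.pi * b = m)
    (k : Fin 3 → ℝ)
    (f : (Fin 3 → ℝ) → ℂ) (hsm : ContDiff ℝ (⊤ : ℕ∞) f) (hsupp : HasCompactSupport f)
    (v : (Fin 3 → ℝ) → ℂ)
    (hv : v = fun x => ∑' n : Fin 3 → ℤ,
      Complex.exp (-Complex.I * ((∑ j, k j * (x j + 2 * Real.pi * (n j : ℝ))) : ℝ)) *
      Complex.exp (Complex.I * ((2 * Real.pi * b * (n 1 : ℝ) * x 0) : ℝ)) *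
      f (fun j => x j + 2 * Real.pi * (n j : ℝ))) :
    (∀ x₁ x₃ : ℝ, v ![x₁, Real.pi, x₃]
        = Complex.exp (-Complex.I * ((2 * Real.pi * b * x₁) : ℝ)) * v ![x₁, -Real.pi, x₃]) ∧
    (∀ x₂ x₃ : ℝ, v ![-Real.pi, x₂, x₃] = v ![Real.pi, x₂, x₃]) ∧
    (∀ x₁ x₂ : ℝ, v ![x₁, x₂, -Real.pi] = v ![x₁, x₂, Real.pi]) := by
  obtain ⟨m, hm⟩ := hbint
  have hmC : (2 : ℂ) * (Real.pi : ℂ) * (b : ℂ) = (m : ℂ) := by exact_mod_cast hm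
  subst hv
  refine ⟨?_, ?_, ?_⟩
  · intro x₁ x₃
    simp only
    apply tsum_shift_aux _ _ _ (![0, 1, 0] : Fin 3 → ℤ)
    intro n
    have hvec : ∀ j : Fin 3, (![x₁, Real.pi, x₃] j + 2 * Real.pi * ((n j : ℤ) : ℝ))
        = (![x₁, -Real.pi, x₃] j + 2 * Real.pi * ((((n + (![0, 1, 0] : Fin 3 → ℤ)) j : ℤ)) : ℝ)) := by
      intro j
      fin_cases j <;> simp [Pi.add_apply] <;> push_cast <;> ring
    simp only [hvec]
    simp only [Pi.add_apply, Matrix.cons_val_zero, Matrix.cons_val_one, Matrix.head_cons, add_zero]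
    simp only [← mul_assoc, ← Complex.exp_add]
    congr 1
    rw [Complex.exp_eq_exp_iff_exists_int]
    exact ⟨0, by push_cast; ring⟩
  · intro x₂ x₃
    simp only
    have := tsum_shift_aux
      (fun n : Fin 3 → ℤ =>
        Complex.exp (-Complex.I * ((∑ j, k j * (![-Real.pi, x₂, x₃] j + 2 * Real.pi * (n j : ℝ))) : ℝ)) *
        Complex.exp (Complex.I * ((2 * Real.pi * b * (n 1 : ℝ) * ![-Real.pi, x₂, x₃] 0) : ℝ)) *
        f (fun j => ![-Real.pi, x₂, x₃] j + 2 * Real.pi * (n j : ℝ)))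
      (fun n : Fin 3 → ℤ =>
        Complex.exp (-Complex.I * ((∑ j, k j * (![Real.pi, x₂, x₃] j + 2 * Real.pi * (n j : ℝ))) : ℝ)) *
        Complex.exp (Complex.I * ((2 * Real.pi * b * (n 1 : ℝ) * ![Real.pi, x₂, x₃] 0) : ℝ)) *
        f (fun j => ![Real.pi, x₂, x₃] j + 2 * Real.pi * (n j : ℝ)))
      1 (![-1, 0, 0] : Fin 3 → ℤ) ?_
    · simpa using this
    intro n
    rw [one_mul]
    have hvec : ∀ j : Fin 3, (![-Real.pi, x₂, x₃] j + 2 * Real.pi * ((n j : ℤ) : ℝ))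
        = (![Real.pi, x₂, x₃] j + 2 * Real.pi * ((((n + (![-1, 0, 0] : Fin 3 → ℤ)) j : ℤ)) : ℝ)) := by
      intro j
      fin_cases j <;> simp [Pi.add_apply] <;> push_cast <;> ring
    simp only [hvec]
    simp only [Pi.add_apply, Matrix.cons_val_zero, Matrix.cons_val_one, Matrix.head_cons, add_zero]
    simp only [← mul_assoc, ← Complex.exp_add]
    congr 1
    rw [Complex.exp_eq_exp_iff_exists_int]
    refine ⟨-(m * n 1), ?_⟩
    push_cast
    linear_combination (-2 * Complex.I * (n 1 : ℂ) * (Real.pi : ℂ)) * hmC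
  · intro x₁ x₂
    simp only
    have := tsum_shift_aux
      (fun n : Fin 3 → ℤ =>
        Complex.exp (-Complex.I * ((∑ j, k j * (![x₁, x₂, -Real.pi] j + 2 * Real.pi * (n j : ℝ))) : ℝ)) *
        Complex.exp (Complex.I * ((2 * Real.pi * b * (n 1 : ℝ) * ![x₁, x₂, -Real.pi] 0) : ℝ)) *
        f (fun j => ![x₁, x₂, -Real.pi] j + 2 * Real.pi * (n j : ℝ)))
      (fun n : Fin 3 → ℤ =>
        Complex.exp (-Complex.I * ((∑ j, k j * (![x₁, x₂, Real.pi] j + 2 * Real.pi * (n j : ℝ))) : ℝ)) *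
        Complex.exp (Complex.I * ((2 * Real.pi * b * (n 1 : ℝ) * ![x₁, x₂, Real.pi] 0) : ℝ)) *
        f (fun j => ![x₁, x₂, Real.pi] j + 2 * Real.pi * (n j : ℝ)))
      1 (![0, 0, -1] : Fin 3 → ℤ) ?_
    · simpa using this
    intro n
    rw [one_mul]
    have hvec : ∀ j : Fin 3, (![x₁, x₂, -Real.pi] j + 2 * Real.pi * ((n j : ℤ) : ℝ))
        = (![x₁, x₂, Real.pi] j + 2 * Real.pi * ((((n + (![0, 0, -1] : Fin 3 → ℤ)) j : ℤ)) : ℝ)) := by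
      intro j
      fin_cases j <;> simp [Pi.add_apply] <;> push_cast <;> ring
    simp only [hvec]
    simp only [Pi.add_apply, Matrix.cons_val_zero, Matrix.cons_val_one, Matrix.head_cons, add_zero]
end
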